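/- arXiv:2505.07335 — 5 statements merged into one kernel-verified Lean document; each statement's English description precedes it below -/
import Mathlib

section
/- Let d, λ, y > 0 and x ∈ ℝ. Suppose that for all nonzero integers p and all integers q, (p/(d/λ))² + ((q·d/λ − p·x/λ)/((d/λ)(y/λ)))² > 4. Then there exist no angles θ ≠ θ' (mod 2π) with sin θ ≠ sin θ' satisfying simultaneously d(sin θ − sin θ')/λ ∈ ℤ \ {0} and (x(sin θ − sin θ') + y(cos θ − cos θ'))/λ ∈ ℤ. -/
/-! The constraints express `sin θ - sin θ'` and `cos θ - cos θ'` exactly as the two quotients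
in (C3) for the corresponding integers `p, q`; but the distance between the points `(sin θ, cos θ)`
and `(sin θ', cos θ')` of the unit circle is at most its diameter `2`, contradicting (C3). -/

open Real

theorem sin_sub_sin_sq_add_cos_sub_cos_sq (θ θ' : ℝ) :
    (sin θ - sin θ') ^ 2 + (cos θ - cos θ') ^ 2 = 2 - 2 * cos (θ - θ') := by
  rw [cos_sub]
  linear_combination sin_sq_add_cos_sq θ + sin_sq_add_cos_sq θ'

theorem sin_sub_sin_sq_add_cos_sub_cos_sq_le_four (θ θ' : ℝ) :
    (sin θ - sin θ') ^ 2 + (cos θ - cos θ') ^ 2 ≤ 4 := by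
  rw [sin_sub_sin_sq_add_cos_sub_cos_sq]
  linarith [neg_one_le_cos (θ - θ')]

section Rescaling

variable {d lam x y s c p q : ℝ}

theorem div_div_eq_of_mul_div_eq (hd : d ≠ 0) (hlam : lam ≠ 0) (hp : d * s / lam = p) :
    p / (d / lam) = s := by
  rw [← hp]
  field_simp

theorem sub_div_mul_div_eq_of_mul_div_eq (hd : d ≠ 0) (hlam : lam ≠ 0) (hy : y ≠ 0)
    (hp : d * s / lam = p) (hq : (x * s + y * c) / lam = q) :
    (q * (d / lam) - p * (x / lam)) / ((d / lam) * (y / lam)) = c := by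
  rw [← hp, ← hq]
  field_simp
  ring

end Rescaling

theorem stmt_1 (d lam x y : ℝ) (hd : 0 < d) (hlam : 0 < lam) (hy : 0 < y)
    (hC3 : ∀ (p : ℤ), p ≠ 0 → ∀ q : ℤ,
      ((p : ℝ) / (d / lam)) ^ 2 +
        (((q : ℝ) * (d / lam) - (p : ℝ) * (x / lam)) / ((d / lam) * (y / lam))) ^ 2 > 4) :
    ¬ ∃ θ θ' : ℝ, (¬ ∃ k : ℤ, θ - θ' = 2 * π * k) ∧ sin θ ≠ sin θ' ∧
      (∃ p : ℤ, p ≠ 0 ∧ d * (sin θ - sin θ') / lam = (p : ℝ)) ∧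
      (∃ q : ℤ, (x * (sin θ - sin θ') + y * (cos θ - cos θ')) / lam = (q : ℝ)) := by
  rintro ⟨θ, θ', -, -, ⟨p, hp, hpe⟩, ⟨q, hqe⟩⟩
  have hC := hC3 p hp q
  rw [div_div_eq_of_mul_div_eq hd.ne' hlam.ne' hpe,
    sub_div_mul_div_eq_of_mul_div_eq hd.ne' hlam.ne' hy.ne' hpe hqe] at hC
  linarith [sin_sub_sin_sq_add_cos_sub_cos_sq_le_four θ θ']
end

section
/- For d = √3·λ/3, x = √3·λ/6, y = λ/2, and for all integers p ≠ 0 and q, the quantity (p/(d/λ))² + ((q·d/λ − p·x/λ)/((d/λ)(y/λ)))² equals 3p² + (2q − p)², and this is at least 4, with equality exactly when (p,q) ∈ {(1,0), (1,1), (−1,0), (−1,−1)}. -/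
/-! The quadratic form is four times the norm form `p² - pq + q²` of the hexagonal (Eisenstein)
lattice: `3p² + (2q - p)² = 4 (p² - pq + q²)`. That norm is a positive integer away from the
origin, so it is at least `1`, and it equals `1` exactly at the six units of the lattice, of which
the four with `p ≠ 0` remain. The real identity is a direct computation once the ratios `d/λ`,
`x/λ`, `y/λ` are evaluated to `√3/3`, `√3/6`, `1/2`. -/

namespace Int

theorem three_mul_sq_add_sq_eq (p q : ℤ) :
    3 * p ^ 2 + (2 * q - p) ^ 2 = 4 * (p ^ 2 - p * q + q ^ 2) := by
  ring

theorem one_le_sq_sub_mul_add_sq {p q : ℤ} (hpq : p ≠ 0 ∨ q ≠ 0) :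
    1 ≤ p ^ 2 - p * q + q ^ 2 := by
  suffices 0 < p ^ 2 - p * q + q ^ 2 by omega
  rcases hpq with h | h
  · nlinarith [sq_pos_of_ne_zero h, sq_nonneg (2 * q - p)]
  · nlinarith [sq_pos_of_ne_zero h, sq_nonneg (2 * p - q)]

theorem sq_sub_mul_add_sq_eq_one_iff {p q : ℤ} :
    p ^ 2 - p * q + q ^ 2 = 1 ↔
      (p, q) = (1, 0) ∨ (p, q) = (0, 1) ∨ (p, q) = (1, 1) ∨
        (p, q) = (-1, 0) ∨ (p, q) = (0, -1) ∨ (p, q) = (-1, -1) := by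
  constructor
  · intro h
    obtain ⟨hp₁, hp₂⟩ : -1 ≤ p ∧ p ≤ 1 := by constructor <;> nlinarith [sq_nonneg (2 * q - p)]
    obtain ⟨hq₁, hq₂⟩ : -1 ≤ q ∧ q ≤ 1 := by constructor <;> nlinarith [sq_nonneg (2 * p - q)]
    interval_cases p <;> interval_cases q <;> simp_all
  · rintro (h | h | h | h | h | h) <;> simp only [Prod.mk.injEq] at h <;> obtain ⟨rfl, rfl⟩ := h <;>
      norm_num

theorem four_le_three_mul_sq_add_sq {p : ℤ} (q : ℤ) (hp : p ≠ 0) :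
    4 ≤ 3 * p ^ 2 + (2 * q - p) ^ 2 := by
  rw [three_mul_sq_add_sq_eq]
  linarith [one_le_sq_sub_mul_add_sq (q := q) (Or.inl hp)]

theorem three_mul_sq_add_sq_eq_four_iff {p q : ℤ} (hp : p ≠ 0) :
    3 * p ^ 2 + (2 * q - p) ^ 2 = 4 ↔
      (p, q) = (1, 0) ∨ (p, q) = (1, 1) ∨ (p, q) = (-1, 0) ∨ (p, q) = (-1, -1) := by
  rw [three_mul_sq_add_sq_eq, mul_eq_left₀ four_ne_zero, sq_sub_mul_add_sq_eq_one_iff]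
  simp only [Prod.mk.injEq, hp, false_and, false_or]

end Int

theorem hexagonal_ratio_identity (a b : ℝ) :
    (a / (√3 / 3)) ^ 2 + ((b * (√3 / 3) - a * (√3 / 6)) / ((√3 / 3) * (1 / 2))) ^ 2 =
      3 * a ^ 2 + (2 * b - a) ^ 2 := by
  have h3 : √3 ≠ 0 := by positivity
  field_simp
  rw [Real.sq_sqrt zero_le_three]
  ring

theorem stmt_3 (lam d x y : ℝ) (hlam : 0 < lam)
    (hd : d = Real.sqrt 3 * lam / 3) (hx : x = Real.sqrt 3 * lam / 6) (hy : y = lam / 2)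
    (p q : ℤ) (hp : p ≠ 0) :
    ((p : ℝ) / (d / lam)) ^ 2 +
        (((q : ℝ) * (d / lam) - (p : ℝ) * (x / lam)) / ((d / lam) * (y / lam))) ^ 2 =
      3 * (p : ℝ) ^ 2 + (2 * (q : ℝ) - (p : ℝ)) ^ 2 ∧
    (3 * (p : ℝ) ^ 2 + (2 * (q : ℝ) - (p : ℝ)) ^ 2 ≥ 4) ∧
    (3 * (p : ℝ) ^ 2 + (2 * (q : ℝ) - (p : ℝ)) ^ 2 = 4 ↔
      (p, q) = (1, 0) ∨ (p, q) = (1, 1) ∨ (p, q) = (-1, 0) ∨ (p, q) = (-1, -1)) := by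
  have hcast : 3 * (p : ℝ) ^ 2 + (2 * (q : ℝ) - (p : ℝ)) ^ 2 =
      ((3 * p ^ 2 + (2 * q - p) ^ 2 : ℤ) : ℝ) := by
    push_cast; ring
  have hlam₀ : lam ≠ 0 := hlam.ne'
  have hdl : d / lam = √3 / 3 := by rw [hd]; field_simp
  have hxl : x / lam = √3 / 6 := by rw [hx]; field_simp
  have hyl : y / lam = 1 / 2 := by rw [hy]; field_simp
  refine ⟨?_, ?_, ?_⟩
  · rw [hdl, hxl, hyl, hexagonal_ratio_identity]
  · rw [hcast]
    exact_mod_cast Int.four_le_three_mul_sq_add_sq q hp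
  · rw [hcast, ← Int.three_mul_sq_add_sq_eq_four_iff hp]
    exact_mod_cast Iff.rfl
end

section
/- Suppose the beam patterns of a multiple linear array satisfy f_w(θ) = f_w(θ') for every choice of complex weight vector w, where f_w(θ) is a weighted sum of the exponentials exp(i·2π(n−1)d₁ sin θ/λ) for n = 1,…,N₁ and exp(i·2π(x_{l,1} sin θ + y_{l,1} cos θ)/λ)·exp(i·2π(n−1)d_l sin θ/λ) for l = 2,…,M, n = 1,…,N_l (with N_l ≥ 2 and sin θ ≠ sin θ'). Then for each i = 1,…,M, d_i(sin θ − sin θ')/λ ∈ ℤ \ {0}, and for each l = 2,…,M, (x_{l,1}(sin θ − sin θ') + y_{l,1}(cos θ − cos θ'))/λ ∈ ℤ. -/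
/-!
Taking for `w` the weight vector with a single nonzero entry, at element `n` of sub-array `l`,
isolates one term of the pattern: `exp (i·2π(x_l sin φ + y_l cos φ + n d_l sin φ)/λ)` takes
the same value at `θ` and `θ'`, so `A_l + n D_l ∈ ℤ` with
`A_l = (x_l (sin θ - sin θ') + y_l (cos θ - cos θ'))/λ` and `D_l = d_l (sin θ - sin θ')/λ`.
The elements `n = 0` and `n = 1` (available since `N_l ≥ 2`) give `A_l ∈ ℤ` and `D_l ∈ ℤ`,
and `D_l ≠ 0` because `d_l > 0` and `sin θ ≠ sin θ'`.
-/

open Real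

theorem exists_int_sub_eq_of_cexp_two_pi_mul_I_eq {a b : ℝ}
    (h : Complex.exp (2 * π * a * Complex.I) = Complex.exp (2 * π * b * Complex.I)) :
    ∃ k : ℤ, a - b = k := by
  have hexp : Complex.exp ((a - b : ℝ) * (2 * π * Complex.I)) = 1 := by
    rw [show ((a - b : ℝ) : ℂ) * (2 * π * Complex.I) =
        2 * π * a * Complex.I - 2 * π * b * Complex.I by push_cast; ring,
      Complex.exp_sub, h, div_self (Complex.exp_ne_zero _)]
  obtain ⟨k, hk⟩ := Complex.exp_eq_one_iff.mp hexp
  exact ⟨k, by exact_mod_cast mul_right_cancel₀ Complex.two_pi_I_ne_zero hk⟩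

section PiSingle

variable {ι R : Type*} {κ : ι → Type*} [Fintype ι] [DecidableEq ι] [∀ i, Fintype (κ i)]
  [∀ i, DecidableEq (κ i)] (l : ι) (n : κ l)

theorem sum_mul_sum_pi_single_mul [NonUnitalNonAssocSemiring R] (a : ι → R) (b : ∀ i, κ i → R)
    (r : R) :
    ∑ i, a i * ∑ j, (Pi.single l (Pi.single n r) : ∀ i, κ i → R) i j * b i j =
      a l * (r * b l n) := by
  rw [Fintype.sum_eq_single l, Pi.single_eq_same, Fintype.sum_eq_single n, Pi.single_eq_same]
  · intro j hj; rw [Pi.single_eq_of_ne hj, zero_mul]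
  · intro i hi
    simp only [Pi.single_eq_of_ne hi, Pi.zero_apply, zero_mul, Finset.sum_const_zero, mul_zero]

theorem sum_sum_norm_pi_single [SeminormedAddGroup R] (r : R) :
    ∑ i, ∑ j, ‖(Pi.single l (Pi.single n r) : ∀ i, κ i → R) i j‖ = ‖r‖ := by
  rw [Fintype.sum_eq_single l, Pi.single_eq_same, Fintype.sum_eq_single n, Pi.single_eq_same]
  · intro j hj; rw [Pi.single_eq_of_ne hj, norm_zero]
  · intro i hi
    simp only [Pi.single_eq_of_ne hi, Pi.zero_apply, norm_zero, Finset.sum_const_zero]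

omit [DecidableEq ι] [∀ i, DecidableEq (κ i)] in
theorem mul_eq_of_forall_normalized_sum_eq {α : Type*} (F : (∀ i, κ i → ℂ) → α → ℂ)
    (a : α → ι → ℂ) (b : α → ∀ i, κ i → ℂ)
    (hF : ∀ w φ, F w φ =
      ((∑ i, ∑ j, ‖w i j‖ : ℝ) : ℂ)⁻¹ * ∑ i, a φ i * ∑ j, w i j * b φ i j)
    {φ φ' : α} (heq : ∀ w, F w φ = F w φ') :
    a φ l * b φ l n = a φ' l * b φ' l n := by
  classical
  simpa only [hF, sum_mul_sum_pi_single_mul, sum_sum_norm_pi_single, norm_one,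
    Complex.ofReal_one, inv_one, one_mul] using heq (Pi.single l (Pi.single n 1))

end PiSingle

theorem stmt_7_general (M : ℕ) (hM : 1 ≤ M) (lam : ℝ) (hlam : 0 < lam)
    (d : Fin M → ℝ) (hd : ∀ i, 0 < d i)
    (x y : Fin M → ℝ)
    (Nl : Fin M → ℕ) (hNl : ∀ l, 2 ≤ Nl l)
    (θ θ' : ℝ) (hsin : sin θ ≠ sin θ')
    (F : (∀ l : Fin M, Fin (Nl l) → ℂ) → ℝ → ℂ)
    (hF : ∀ w φ, F w φ = ((∑ l, ∑ n, ‖w l n‖ : ℝ) : ℂ)⁻¹ *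
      ∑ l, Complex.exp (Complex.I * (2 * π * (x l * sin φ + y l * cos φ) / lam)) *
        ∑ n, w l n * Complex.exp (Complex.I * (2 * π * (n : ℕ) * d l * sin φ / lam)))
    (heq : ∀ w, F w θ = F w θ') :
    (∀ i : Fin M, ∃ p : ℤ, p ≠ 0 ∧ d i * (sin θ - sin θ') / lam = (p : ℝ)) ∧
    (∀ l : Fin M, l ≠ ⟨0, hM⟩ →
      ∃ q : ℤ, (x l * (sin θ - sin θ') + y l * (cos θ - cos θ')) / lam = (q : ℝ)) := by
  have hphase : ∀ l (n : Fin (Nl l)), ∃ k : ℤ,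
      (x l * (sin θ - sin θ') + y l * (cos θ - cos θ')) / lam
        + n * (d l * (sin θ - sin θ') / lam) = k := by
    intro l n
    have h := mul_eq_of_forall_normalized_sum_eq l n F _ _ hF heq
    rw [← Complex.exp_add, ← Complex.exp_add] at h
    obtain ⟨k, hk⟩ := exists_int_sub_eq_of_cexp_two_pi_mul_I_eq
      (a := (x l * sin θ + y l * cos θ + n * d l * sin θ) / lam)
      (b := (x l * sin θ' + y l * cos θ' + n * d l * sin θ') / lam)
      (by convert h using 2 <;> push_cast <;> ring)
    exact ⟨k, by rw [← hk]; ring⟩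
  refine ⟨fun i => ?_, fun l _ => ?_⟩
  · obtain ⟨p₀, hp₀⟩ := hphase i ⟨0, by have := hNl i; omega⟩
    obtain ⟨p₁, hp₁⟩ := hphase i ⟨1, hNl i⟩
    have hp : d i * (sin θ - sin θ') / lam = ((p₁ - p₀ : ℤ) : ℝ) := by
      push_cast at hp₀ hp₁ ⊢; linarith
    refine ⟨p₁ - p₀, fun h => ?_, hp⟩
    have hD : d i * (sin θ - sin θ') / lam ≠ 0 :=
      div_ne_zero (mul_ne_zero (hd i).ne' (sub_ne_zero.mpr hsin)) hlam.ne'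
    rw [hp, h, Int.cast_zero] at hD
    exact hD rfl
  · obtain ⟨q, hq⟩ := hphase l ⟨0, by have := hNl l; omega⟩
    exact ⟨q, by simpa only [CharP.cast_eq_zero, zero_mul, add_zero] using hq⟩

theorem stmt_7 (M : ℕ) (hM : 1 ≤ M) (lam : ℝ) (hlam : 0 < lam)
    (d : Fin M → ℝ) (hd : ∀ i, 0 < d i)
    (x y : Fin M → ℝ) (hx0 : x ⟨0, hM⟩ = 0) (hy0 : y ⟨0, hM⟩ = 0)
    (Nl : Fin M → ℕ) (hNl : ∀ l, 2 ≤ Nl l)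
    (θ θ' : ℝ) (hsin : sin θ ≠ sin θ')
    (F : (∀ l : Fin M, Fin (Nl l) → ℂ) → ℝ → ℂ)
    (hF : ∀ w φ, F w φ = ((∑ l, ∑ n, ‖w l n‖ : ℝ) : ℂ)⁻¹ *
      ∑ l, Complex.exp (Complex.I * (2 * π * (x l * sin φ + y l * cos φ) / lam)) *
        ∑ n, w l n * Complex.exp (Complex.I * (2 * π * (n : ℕ) * d l * sin φ / lam)))
    (heq : ∀ w, F w θ = F w θ') :
    (∀ i : Fin M, ∃ p : ℤ, p ≠ 0 ∧ d i * (sin θ - sin θ') / lam = (p : ℝ)) ∧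
    (∀ l : Fin M, l ≠ ⟨0, hM⟩ →
      ∃ q : ℤ, (x l * (sin θ - sin θ') + y l * (cos θ - cos θ')) / lam = (q : ℝ)) :=
  stmt_7_general M hM lam hlam d hd x y Nl hNl θ θ' hsin F hF heq
end

section
/- Under the setting of the multiple linear array, if for each i = 1,…,M, d_i(sin θ − sin θ')/λ is a nonzero integer, and for each l = 2,…,M, (x_{l,1}(sin θ − sin θ') + y_{l,1}(cos θ − cos θ'))/λ is an integer, then for every weight vector w, the array response satisfies f_w(θ) = f_w(θ'). -/
open Real

/-
The hypotheses make each phase at θ differ from the same phase at θ' by an integer multiple of 2π: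
the element phases within subarray l by n·p_l, the subarray offsets by q_l (and by 0 for the
reference subarray, which sits at the origin). Hence every exponential, and so the whole response,
takes the same value at θ and θ'; the normalization does not depend on the angle at all.
-/

lemma cexp_phase_eq_of_sub_div_eq_int {lam a b : ℝ} {k : ℤ} (h : (a - b) / lam = k) :
    Complex.exp (Complex.I * (2 * π * a / lam)) = Complex.exp (Complex.I * (2 * π * b / lam)) := by
  rw [Complex.exp_eq_exp_iff_exists_int]
  refine ⟨k, ?_⟩
  have hab : a / lam = b / lam + k := by rw [← h, sub_div]; ring
  have hab' : (a : ℂ) / lam = b / lam + k := by exact_mod_cast hab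
  calc Complex.I * (2 * π * a / lam) = 2 * π * Complex.I * (a / lam) := by ring
    _ = _ := by rw [hab']; ring

lemma sum_mul_cexp_steering_eq {N : ℕ} (w : Fin N → ℂ) {lam D s s' : ℝ} {p : ℤ}
    (hp : D * (s - s') / lam = p) :
    ∑ n : Fin N, w n * Complex.exp (Complex.I * (2 * π * (n : ℕ) * D * s / lam)) =
      ∑ n : Fin N, w n * Complex.exp (Complex.I * (2 * π * (n : ℕ) * D * s' / lam)) := by
  refine Finset.sum_congr rfl fun n _ => congrArg (w n * ·) ?_
  have hn : ((n : ℕ) * D * s - (n : ℕ) * D * s') / lam = ((n * p : ℤ) : ℝ) := by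
    push_cast; rw [← hp]; ring
  have hphase := cexp_phase_eq_of_sub_div_eq_int hn
  simp only [Complex.ofReal_mul, Complex.ofReal_natCast] at hphase
  simpa only [mul_assoc] using hphase

theorem stmt_8_general (M : ℕ) (hM : 1 ≤ M) (lam : ℝ)
    (d : Fin M → ℝ)
    (x y : Fin M → ℝ) (hx0 : x ⟨0, hM⟩ = 0) (hy0 : y ⟨0, hM⟩ = 0)
    (Nl : Fin M → ℕ)
    (θ θ' : ℝ)
    (F : (∀ l : Fin M, Fin (Nl l) → ℂ) → ℝ → ℂ)
    (hF : ∀ w φ, F w φ = ((∑ l, ∑ n, ‖w l n‖ : ℝ) : ℂ)⁻¹ *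
      ∑ l, Complex.exp (Complex.I * (2 * π * (x l * sin φ + y l * cos φ) / lam)) *
        ∑ n, w l n * Complex.exp (Complex.I * (2 * π * (n : ℕ) * d l * sin φ / lam)))
    (hC1 : ∀ i : Fin M, ∃ p : ℤ, p ≠ 0 ∧ d i * (sin θ - sin θ') / lam = (p : ℝ))
    (hC2 : ∀ l : Fin M, l ≠ ⟨0, hM⟩ →
      ∃ q : ℤ, (x l * (sin θ - sin θ') + y l * (cos θ - cos θ')) / lam = (q : ℝ)) :
    ∀ w, F w θ = F w θ' := by
  intro w
  have hoffset : ∀ l, ∃ q : ℤ,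
      (x l * sin θ + y l * cos θ - (x l * sin θ' + y l * cos θ')) / lam = q := by
    intro l
    by_cases hl : l = ⟨0, hM⟩
    · exact ⟨0, by simp [hl, hx0, hy0]⟩
    · obtain ⟨q, hq⟩ := hC2 l hl
      exact ⟨q, by rw [← hq]; ring⟩
  rw [hF, hF]
  refine congrArg _ (Finset.sum_congr rfl fun l _ => ?_)
  obtain ⟨q, hq⟩ := hoffset l
  obtain ⟨p, -, hp⟩ := hC1 l
  have houter := cexp_phase_eq_of_sub_div_eq_int hq
  simp only [Complex.ofReal_add, Complex.ofReal_mul] at houter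
  rw [houter, sum_mul_cexp_steering_eq (w l) hp]

theorem stmt_8 (M : ℕ) (hM : 1 ≤ M) (lam : ℝ) (hlam : 0 < lam)
    (d : Fin M → ℝ) (hd : ∀ i, 0 < d i)
    (x y : Fin M → ℝ) (hx0 : x ⟨0, hM⟩ = 0) (hy0 : y ⟨0, hM⟩ = 0)
    (Nl : Fin M → ℕ) (hNl : ∀ l, 2 ≤ Nl l)
    (θ θ' : ℝ)
    (F : (∀ l : Fin M, Fin (Nl l) → ℂ) → ℝ → ℂ)
    (hF : ∀ w φ, F w φ = ((∑ l, ∑ n, ‖w l n‖ : ℝ) : ℂ)⁻¹ *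
      ∑ l, Complex.exp (Complex.I * (2 * π * (x l * sin φ + y l * cos φ) / lam)) *
        ∑ n, w l n * Complex.exp (Complex.I * (2 * π * (n : ℕ) * d l * sin φ / lam)))
    (hC1 : ∀ i : Fin M, ∃ p : ℤ, p ≠ 0 ∧ d i * (sin θ - sin θ') / lam = (p : ℝ))
    (hC2 : ∀ l : Fin M, l ≠ ⟨0, hM⟩ →
      ∃ q : ℤ, (x l * (sin θ - sin θ') + y l * (cos θ - cos θ')) / lam = (q : ℝ)) :
    ∀ w, F w θ = F w θ' :=
  stmt_8_general M hM lam d x y hx0 hy0 Nl θ θ' F hF hC1 hC2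
end

section
/- Let r > 0, θ ∈ ℝ, and (xₙ, yₙ) ∈ ℝ². Then the distance rₙ = √((r sin θ − xₙ)² + (r cos θ − yₙ)²) satisfies rₙ = r·√(1 − 2(xₙ sin θ + yₙ cos θ)/r + (xₙ² + yₙ²)/r²). Moreover, |rₙ − (r − (xₙ sin θ + yₙ cos θ))| ≤ (xₙ² + yₙ²)/(2r) whenever r > √(xₙ² + yₙ²) (i.e., the far-field linear approximation error is at most (xₙ²+yₙ²)/(2r)). -/
/-!
Write `a = xₙ sin θ + yₙ cos θ` and `q = xₙ² + yₙ²`. Expanding the squares and using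
`sin² θ + cos² θ = 1` gives `rₙ² = r² - 2ra + q`, and `a² ≤ q` by Cauchy–Schwarz. Hence
`(r - a)² ≤ rₙ² ≤ (r - a + q/(2r))²`, the slack in the second inequality being `(a - q/(2r))²`.
-/

open Real

lemma polar_sub_sq_add_sq (r θ x y : ℝ) :
    (r * sin θ - x) ^ 2 + (r * cos θ - y) ^ 2
      = r ^ 2 - 2 * r * (x * sin θ + y * cos θ) + (x ^ 2 + y ^ 2) := by
  linear_combination r ^ 2 * sin_sq_add_cos_sq θ

lemma sq_mul_sin_add_mul_cos_le (θ x y : ℝ) : (x * sin θ + y * cos θ) ^ 2 ≤ x ^ 2 + y ^ 2 := by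
  nlinarith [sq_nonneg (x * cos θ - y * sin θ), sin_sq_add_cos_sq θ]

lemma mul_sqrt_one_sub_add_div {r : ℝ} (hr : 0 < r) (a q : ℝ) :
    r * √(1 - 2 * a / r + q / r ^ 2) = √(r ^ 2 - 2 * r * a + q) := by
  rw [← sqrt_sq hr.le, ← sqrt_mul (sq_nonneg r), sqrt_sq hr.le]
  congr 1
  field_simp

lemma abs_sqrt_sub_le_of_sq_le {r a q : ℝ} (hr : 0 < r) (ha : a ^ 2 ≤ q) :
    |√(r ^ 2 - 2 * r * a + q) - (r - a)| ≤ q / (2 * r) := by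
  have hlower : r - a ≤ √(r ^ 2 - 2 * r * a + q) :=
    (le_abs_self _).trans (abs_le_sqrt (by nlinarith))
  have hupper : √(r ^ 2 - 2 * r * a + q) ≤ r - a + q / (2 * r) := by
    have hq : q / (2 * r) * (2 * r) = q := div_mul_cancel₀ q (by positivity)
    refine sqrt_le_iff.mpr ⟨?_, ?_⟩
    · -- `2r (r - a) + q ≥ r² + (r - a)²` since `q ≥ a²`
      nlinarith [sq_nonneg (r - a)]
    · nlinarith [sq_nonneg (a - q / (2 * r))]
  rw [abs_sub_le_iff]
  constructor <;> linarith

theorem stmt_15 (r θ xn yn : ℝ) (hr : 0 < r)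
    (rn : ℝ) (hrn : rn = Real.sqrt ((r * sin θ - xn) ^ 2 + (r * cos θ - yn) ^ 2)) :
    rn = r * Real.sqrt (1 - 2 * (xn * sin θ + yn * cos θ) / r + (xn ^ 2 + yn ^ 2) / r ^ 2) ∧
    (Real.sqrt (xn ^ 2 + yn ^ 2) < r →
      |rn - (r - (xn * sin θ + yn * cos θ))| ≤ (xn ^ 2 + yn ^ 2) / (2 * r)) := by
  rw [hrn, polar_sub_sq_add_sq]
  exact ⟨(mul_sqrt_one_sub_add_div hr _ _).symm,
    fun _ => abs_sqrt_sub_le_of_sq_le hr (sq_mul_sin_add_mul_cos_le θ xn yn)⟩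
end
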